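/- arXiv:1803.09991 — 3 statements merged into one kernel-verified Lean document; each statement's English description precedes it below -/
import Mathlib

section
/- Subadditivity of the activity: for all s, t ∈ FEnd(Σ*) and every n ∈ ℕ, α_{st}(n) ≤ α_s(n) + α_t(n), where st denotes the left-to-right composition of s and t. -/
open Filter Topology

namespace AutHier

variable {A : Type*}

/-- The section (state) `f|_u` of a transformation `f : Σ* → Σ*` at the word `u`. -/
def sec (f : List A → List A) (u : List A) : List A → List A :=
  fun v => (f (u ++ v)).drop u.length

/-- `f` is an endomorphism of `Σ*`: it preserves lengths and prefixes. -/
def IsEnd (f : List A → List A) : Prop :=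
  (∀ u, (f u).length = u.length) ∧ ∀ u v, f u <+: f (u ++ v)

/-- `f` is a finite-state endomorphism of `Σ*` (an element of `FEnd(Σ*)`). -/
def IsFEnd (f : List A → List A) : Prop :=
  IsEnd f ∧ {g | ∃ u, g = sec f u}.Finite

/-- The activity `α_f(n)` of a transformation `f`:
the number of words `v` of length `n` which are images of some word `u`
of length `n` whose section `f|_u` is nontrivial. -/
noncomputable def activity (f : List A → List A) (n : ℕ) : ℕ :=
  Set.ncard {v : List A | v.length = n ∧
    ∃ u : List A, u.length = n ∧ sec f u ≠ id ∧ f u = v}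

/-- The class `SP(d)` of finite-state endomorphisms of
polynomial activity of degree at most `d`. -/
def SP (A : Type*) (d : ℤ) : Set (List A → List A) :=
  {t | IsFEnd t ∧
    Tendsto (fun n : ℕ => (activity t n : ℝ) / (n : ℝ) ^ (d + 1)) atTop (𝓝 0)}

/-- The class `SE(l)` of finite-state endomorphisms of
exponential activity of growth rate at most `l`. -/
def SE (A : Type*) (l : ℝ) : Set (List A → List A) :=
  {t | IsFEnd t ∧
    limsup (fun n : ℕ => Real.log (activity t n) / (n : ℝ)) atTop ≤ l}

/-- The stateset `Q'(t)` of the pruned automaton: all sections of `t` except `id`. -/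
def Qp (t : List A → List A) : Set (List A → List A) :=
  {g | ∃ u, g = sec t u} \ {id}

/-- One-letter transition of the determinized pruned output automaton of `t`. -/
def delta (t : List A → List A) (S : Set (List A → List A)) (y : A) :
    Set (List A → List A) :=
  {s' | s' ∈ Qp t ∧ ∃ s ∈ S, ∃ x : A, s [x] = [y] ∧ sec s [x] = s'}

/-- Extended transition function `δ*` of the determinized pruned output automaton. -/
def deltaStar (t : List A → List A) (S : Set (List A → List A)) (v : List A) :
    Set (List A → List A) :=
  v.foldl (delta t) S

/-- There is a chain of `k` cycles in the determinized pruned output automaton of `t`. -/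
def ChainOfCycles (t : List A → List A) (k : ℕ) : Prop :=
  ∃ (S : Fin k → Set (List A → List A)) (c : Fin k → List A),
    (∀ i, S i ≠ ∅) ∧ (∀ i, c i ≠ []) ∧
    (∀ h : 0 < k, ∃ v, deltaStar t {t} v = S ⟨0, h⟩) ∧
    (∀ i, deltaStar t (S i) (c i) = S i) ∧
    (∀ (i : Fin k) (h : (i : ℕ) + 1 < k),
      (∃ v, deltaStar t (S i) v = S ⟨(i : ℕ) + 1, h⟩) ∧
      ¬ (∃ v, deltaStar t (S ⟨(i : ℕ) + 1, h⟩) v = S i))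

/-- The edge relation of the orbit signalizer graph `Φ`: from the vertex `v = (s,t)`,
reading the letter `x`, with label `(x; m, ℓ)` where `m, ℓ` are the minimal integers
(`ℓ ≥ 1`) with `(s t^{m+ℓ})·x = (s t^m)·x`, the edge goes to
`v' = (r|_x, (t^ℓ)|_{r·x})` where `r = s t^m`. -/
def OSStep (v : (List A → List A) × (List A → List A)) (x : A) (m ℓ : ℕ)
    (v' : (List A → List A) × (List A → List A)) : Prop :=
  1 ≤ ℓ ∧ v.2^[m + ℓ] (v.1 [x]) = v.2^[m] (v.1 [x]) ∧
  (∀ m' ℓ' : ℕ, 1 ≤ ℓ' → v.2^[m' + ℓ'] (v.1 [x]) = v.2^[m'] (v.1 [x]) → m ≤ m') ∧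
  (∀ ℓ' : ℕ, 1 ≤ ℓ' → v.2^[m + ℓ'] (v.1 [x]) = v.2^[m] (v.1 [x]) → ℓ ≤ ℓ') ∧
  v' = (sec (v.2^[m] ∘ v.1) [x], sec (v.2^[ℓ]) ((v.2^[m] ∘ v.1) [x]))

/-- A walk of length `n` in the orbit signalizer graph `Φ`. -/
structure OSPath (A : Type*) (n : ℕ) where
  vert : Fin (n + 1) → (List A → List A) × (List A → List A)
  lett : Fin n → A
  idx : Fin n → ℕ
  per : Fin n → ℕ
  step : ∀ k : Fin n, OSStep (vert k.castSucc) (lett k) (idx k) (per k) (vert k.succ)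

/-- The inf-index-cost `i⁻(π)` of a walk with indices `idx` and periods `per`. -/
def iminusCost {n : ℕ} (idx per : Fin n → ℕ) : ℕ :=
  ∑ k : Fin n, if idx k = 0 then 0
    else (idx k - 1) * (∏ j ∈ Finset.univ.filter (· < k), per j) + 1

/-- The sup-index-cost `i⁺(π)` of a walk with indices `idx` and periods `per`. -/
def iplusCost {n : ℕ} (idx per : Fin n → ℕ) : ℕ :=
  ∑ k : Fin n, (∏ j ∈ Finset.univ.filter (· < k), per j) * idx k

/-- The period-cost `p(π)` of a walk with periods `per`. -/
def pCost {n : ℕ} (per : Fin n → ℕ) : ℕ :=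
  ∏ k : Fin n, per k

/-- The walk `w` starts at the vertex `(id, t)`, i.e. it is a walk in `Φ(t)` from its root. -/
def IsWalkFrom {n : ℕ} (t : List A → List A) (w : OSPath A n) : Prop :=
  w.vert 0 = (id, t)

/-- The vertex `v` is accessible from `(id, t)` in `Φ`, i.e. `v` is a vertex of `Φ(t)`. -/
def OSReach (t : List A → List A) (v : (List A → List A) × (List A → List A)) : Prop :=
  ∃ n : ℕ, ∃ w : OSPath A n, IsWalkFrom t w ∧ w.vert (Fin.last n) = v

/-- The set of inf-index-costs of walks in `Φ(t)` from `(id, t)`. -/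
def IminusCosts (t : List A → List A) : Set ℕ :=
  {c | ∃ n : ℕ, ∃ w : OSPath A n, IsWalkFrom t w ∧ c = iminusCost w.idx w.per}

/-- The set of sup-index-costs of walks in `Φ(t)` from `(id, t)`. -/
def IplusCosts (t : List A → List A) : Set ℕ :=
  {c | ∃ n : ℕ, ∃ w : OSPath A n, IsWalkFrom t w ∧ c = iplusCost w.idx w.per}

/-- The set of period-costs of walks in `Φ(t)` from `(id, t)`. -/
def PCosts (t : List A → List A) : Set ℕ :=
  {c | ∃ n : ℕ, ∃ w : OSPath A n, IsWalkFrom t w ∧ c = pCost w.per}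

/-- `w` is a simple cycle of `Φ(t)`: a closed walk of positive length, lying in `Φ(t)`,
with no repeated vertices. -/
def IsSimpleCycle {n : ℕ} (t : List A → List A) (w : OSPath A n) : Prop :=
  1 ≤ n ∧ OSReach t (w.vert 0) ∧ w.vert (Fin.last n) = w.vert 0 ∧
  ∀ j k : Fin (n + 1), (j : ℕ) < n → (k : ℕ) < n → w.vert j = w.vert k → j = k

/-!
Sections of a composite obey `(st)|_u = (s|_u)(t|_{s·u})`. Hence if `(st)|_u ≠ id`, then either
`s|_u ≠ id`, so that `(st)·u = t·(s·u)` is the image under `t` of a word counted by `α_s(n)`,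
or `s|_u = id`, so that `t|_{s·u} ≠ id` and `(st)·u = t·(s·u)` is itself counted by `α_t(n)`.
-/

def activeImages (f : List A → List A) (n : ℕ) : Set (List A) :=
  {v | v.length = n ∧ ∃ u : List A, u.length = n ∧ sec f u ≠ id ∧ f u = v}

theorem activity_eq_ncard_activeImages (f : List A → List A) (n : ℕ) :
    activity f n = (activeImages f n).ncard :=
  rfl

theorem activeImages_finite [Finite A] (f : List A → List A) (n : ℕ) :
    (activeImages f n).Finite :=
  (List.finite_length_eq A n).subset fun _ hv => hv.1

theorem IsEnd.apply_append {s : List A → List A} (hs : IsEnd s) (u w : List A) :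
    s (u ++ w) = s u ++ sec s u w := by
  obtain ⟨z, hz⟩ := hs.2 u w
  rw [sec, ← hz, ← hs.1 u, List.drop_left]

theorem IsEnd.sec_comp {s : List A → List A} (hs : IsEnd s) (t : List A → List A)
    (u : List A) : sec (t ∘ s) u = sec t (s u) ∘ sec s u := by
  funext w
  rw [Function.comp_apply, sec, Function.comp_apply, hs.apply_append, ← hs.1 u]
  rfl

theorem IsEnd.activeImages_comp_subset {s : List A → List A} (hs : IsEnd s)
    (t : List A → List A) (n : ℕ) :
    activeImages (t ∘ s) n ⊆ t '' activeImages s n ∪ activeImages t n := by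
  rintro v ⟨hv, u, hu, hsec, rfl⟩
  by_cases hsu : sec s u = id
  · have hsec_t : sec t (s u) ≠ id := by
      rwa [hs.sec_comp, hsu, Function.comp_id] at hsec
    exact Or.inr ⟨hv, s u, (hs.1 u).trans hu, hsec_t, rfl⟩
  · exact Or.inl ⟨s u, ⟨(hs.1 u).trans hu, u, hu, hsu, rfl⟩, rfl⟩

theorem activity_comp_le_general {A : Type*} [Fintype A] (s t : List A → List A)
    (hs : IsFEnd s) (n : ℕ) :
    activity (fun u => t (s u)) n ≤ activity s n + activity t n := by
  simp only [activity_eq_ncard_activeImages]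
  calc (activeImages (t ∘ s) n).ncard
      ≤ (t '' activeImages s n ∪ activeImages t n).ncard :=
        Set.ncard_le_ncard (hs.1.activeImages_comp_subset t n)
          (((activeImages_finite s n).image t).union (activeImages_finite t n))
    _ ≤ (t '' activeImages s n).ncard + (activeImages t n).ncard := Set.ncard_union_le _ _
    _ ≤ (activeImages s n).ncard + (activeImages t n).ncard :=
        Nat.add_le_add_right (Set.ncard_image_le (activeImages_finite s n)) _

/-- Subadditivity of the activity: for finite-state endomorphisms `s, t` and every `n`,
`α_{st}(n) ≤ α_s(n) + α_t(n)`, where `st` is the left-to-right composition `u ↦ t (s u)`. -/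
theorem activity_comp_le {A : Type*} [Fintype A] (s t : List A → List A)
    (hs : IsFEnd s) (ht : IsFEnd t) (n : ℕ) :
    activity (fun u => t (s u)) n ≤ activity s n + activity t n :=
  activity_comp_le_general s t hs n

end AutHier
end

section
/- SE(0) coincides with the union of the polynomial classes: for every t ∈ FEnd(Σ*), limsup_{n→∞} (log α_t(n))/n ≤ 0 if and only if there exist an integer d ≥ 0 and a constant c > 0 such that α_t(n) ≤ c·(n^d + 1) for all n ∈ ℕ. -/
open Filter Topology

namespace AutHier

variable {A : Type*}

section Dichotomy

variable (t : List A → List A)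

/-- The state of the determinized output automaton after reading output `v`. -/
def Dset (v : List A) : Set (List A → List A) := {g | ∃ u, t u = v ∧ sec t u = g}

/-- `v` is an "active" output word. -/
def Acc (v : List A) : Prop := ∃ g ∈ Dset t v, g ≠ id

/-- One-step transition on states. -/
def stepD (S : Set (List A → List A)) (y : A) : Set (List A → List A) :=
  {h | ∃ g ∈ S, ∃ x : A, g [x] = [y] ∧ sec g [x] = h}

variable {t}

lemma sec_sec (f : List A → List A) (u w : List A) :
    sec (sec f u) w = sec f (u ++ w) := by
  funext v
  simp [sec, List.drop_drop, List.append_assoc, Nat.add_comm]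

lemma IsEnd.append_eq (h : IsEnd t) (u w : List A) :
    t (u ++ w) = t u ++ sec t u w := by
  obtain ⟨s, hs⟩ := h.2 u w
  rw [← hs]
  congr 1
  have : u.length = (t u).length := (h.1 u).symm
  simp [sec, ← hs, this]

lemma IsEnd.length_eq (h : IsEnd t) (u : List A) : (t u).length = u.length := h.1 u

lemma Dset_snoc (h : IsEnd t) (v : List A) (y : A) :
    Dset t (v ++ [y]) = stepD (Dset t v) y := by
  ext g
  constructor
  · rintro ⟨u, hu, rfl⟩
    have hul : u.length = v.length + 1 := by
      have := h.1 u; rw [hu] at this; simpa using this.symm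
    have hne : u ≠ [] := by intro e; simp [e] at hul
    obtain ⟨u', x, rfl⟩ : ∃ u' x, u = u' ++ [x] := ⟨u.dropLast, u.getLast hne, by
      simpa using (List.dropLast_append_getLast hne).symm⟩
    have hsplit : t (u' ++ [x]) = t u' ++ sec t u' [x] := h.append_eq u' [x]
    have hlen' : (t u').length = v.length := by
      have := h.1 u'; simp at hul; omega
    have hv : t u' = v := by
      have h1 : (t u' ++ sec t u' [x]) = v ++ [y] := by rw [← hsplit, hu]
      have h2 : (sec t u' [x]).length = 1 := by
        have := congrArg List.length h1
        simp at this; omega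
      exact List.append_inj_left h1 (by omega)
    refine ⟨sec t u' , ⟨u', hv, rfl⟩, x, ?_, sec_sec t u' [x]⟩
    · have h1 : (t u' ++ sec t u' [x]) = v ++ [y] := by rw [← hsplit, hu]
      rw [hv] at h1
      exact List.append_inj_right h1 rfl
  · rintro ⟨g, ⟨u', hu', rfl⟩, x, hx, rfl⟩
    refine ⟨u' ++ [x], ?_, (sec_sec t u' [x]).symm⟩
    rw [h.append_eq u' [x], hu', hx]

/-- Transition function iterated along a word. -/
def TD (S : Set (List A → List A)) (w : List A) : Set (List A → List A) :=
  w.foldl stepD S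

lemma Dset_append (h : IsEnd t) (v w : List A) :
    Dset t (v ++ w) = TD (Dset t v) w := by
  induction w using List.reverseRecOn with
  | nil => simp [TD]
  | append_singleton w' y ih =>
    rw [← List.append_assoc, Dset_snoc h, ih]
    simp [TD, List.foldl_append]

lemma Dset_congr (h : IsEnd t) {v1 v2 : List A} (e : Dset t v1 = Dset t v2)
    (w : List A) : Dset t (v1 ++ w) = Dset t (v2 ++ w) := by
  rw [Dset_append h, Dset_append h, e]

lemma Acc_congr (h : IsEnd t) {v1 v2 : List A} (e : Dset t v1 = Dset t v2) :
    Acc t v1 ↔ Acc t v2 := by unfold Acc; rw [e]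

lemma activity_eq (h : IsEnd t) (n : ℕ) :
    activity t n = Set.ncard {v : List A | v.length = n ∧ Acc t v} := by
  unfold activity
  congr 1
  ext v
  simp only [Set.mem_setOf_eq, Acc, Dset]
  constructor
  · rintro ⟨hv, u, hu, hsec, rfl⟩
    exact ⟨hv, sec t u, ⟨u, rfl, rfl⟩, hsec⟩
  · rintro ⟨hv, g, ⟨u, hu, rfl⟩, hg⟩
    refine ⟨hv, u, ?_, hg, hu⟩
    have := h.1 u; rw [hu] at this; omega


variable (t)

/-- The maximal `j ≤ |w|` such that `w.take j` is a cycle of the automaton at `p`. -/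
noncomputable def mcyc (p w : List A) : ℕ :=
  sSup {j | j ≤ w.length ∧ Dset t (p ++ w.take j) = Dset t p}

variable {t}

lemma mcyc_bddAbove (p w : List A) :
    BddAbove {j | j ≤ w.length ∧ Dset t (p ++ w.take j) = Dset t p} :=
  ⟨w.length, fun _ hj => hj.1⟩

lemma mcyc_spec (t : List A → List A) (p w : List A) :
    mcyc t p w ≤ w.length ∧ Dset t (p ++ w.take (mcyc t p w)) = Dset t p :=
  Nat.sSup_mem ⟨0, by simp⟩ (mcyc_bddAbove p w)

lemma le_mcyc (t : List A → List A) (p w : List A) {j : ℕ} (hj : j ≤ w.length)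
    (hD : Dset t (p ++ w.take j) = Dset t p) : j ≤ mcyc t p w :=
  le_csSup (mcyc_bddAbove p w) ⟨hj, hD⟩

variable (t)

/-- The encoding of a word by cycle-lengths and exit letters (fuel-indexed). -/
noncomputable def EncF : ℕ → List A → List A → List (ℕ × Option A)
  | 0, _, _ => []
  | (f+1), p, w =>
      (mcyc t p w, w[mcyc t p w]?) ::
        (if mcyc t p w = w.length then []
         else EncF f (p ++ w.take (mcyc t p w + 1)) (w.drop (mcyc t p w + 1)))
  termination_by structural f => f

/-- The set of states visited while reading `w` after `p`. -/
def Rset (p w : List A) : Set (Set (List A → List A)) :=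
  {S | ∃ j ≤ w.length, Dset t (p ++ w.take j) = S}

variable {t}

@[simp] lemma EncF_zero (p w : List A) : EncF t 0 p w = [] := rfl

lemma EncF_succ (f : ℕ) (p w : List A) :
    EncF t (f+1) p w = (mcyc t p w, w[mcyc t p w]?) ::
      (if mcyc t p w = w.length then []
       else EncF t f (p ++ w.take (mcyc t p w + 1)) (w.drop (mcyc t p w + 1))) := rfl

lemma EncF_ne_nil {f : ℕ} (hf : 0 < f) (p w : List A) : EncF t f p w ≠ [] := by
  cases f with
  | zero => omega
  | succ f => simp [EncF_succ]

lemma EncF_entries : ∀ (f : ℕ) (p w : List A) (x : ℕ × Option A),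
    x ∈ EncF t f p w → x.1 ≤ w.length := by
  intro f
  induction f with
  | zero => intro p w x hx; simp at hx
  | succ f ih =>
    intro p w x hx
    rw [EncF_succ] at hx
    simp only [List.mem_cons] at hx
    rcases hx with rfl | hx
    · exact (mcyc_spec t p w).1
    · split at hx
      · simp at hx
      · have h1 := ih _ _ _ hx
        have h2 := (mcyc_spec t p w).1
        have h3 : (w.drop (mcyc t p w + 1)).length = w.length - (mcyc t p w + 1) :=
          List.length_drop
        omega

lemma Rset_subset (p w : List A) :
    Rset t p w ⊆ {S | S ⊆ {g | ∃ u, g = sec t u}} := by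
  rintro S ⟨j, hj, rfl⟩ g ⟨u, hu, rfl⟩
  exact ⟨u, rfl⟩

lemma Rset_finite (hfin : {g | ∃ u, g = sec t u}.Finite) (p w : List A) :
    (Rset t p w).Finite :=
  (Set.Finite.finite_subsets hfin).subset (Rset_subset p w)

lemma Dset_mem_Rset (p w : List A) : Dset t p ∈ Rset t p w :=
  ⟨0, Nat.zero_le _, by simp⟩

lemma EncF_length_le (hfin : {g | ∃ u, g = sec t u}.Finite) :
    ∀ (f : ℕ) (p w : List A), w.length < f →
      (EncF t f p w).length ≤ (Rset t p w).ncard := by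
  intro f
  induction f with
  | zero => omega
  | succ f ih =>
    intro p w hw
    have hpos : 0 < (Rset t p w).ncard :=
      (Set.ncard_pos (Rset_finite hfin p w)).mpr ⟨_, Dset_mem_Rset p w⟩
    by_cases hj : mcyc t p w = w.length
    · rw [EncF_succ, if_pos hj]; simp; exact hpos
    · have hjle := (mcyc_spec t p w).1
      have hjlt : mcyc t p w < w.length := lt_of_le_of_ne hjle hj
      set j := mcyc t p w with hjdef
      have hlt' : (w.drop (j + 1)).length < f := by
        simp [List.length_drop]; omega
      have hsub : Rset t (p ++ w.take (j+1)) (w.drop (j+1)) ⊆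
          Rset t p w \ {Dset t p} := by
        rintro S ⟨i, hi, rfl⟩
        have heq : (p ++ w.take (j+1)) ++ (w.drop (j+1)).take i
            = p ++ w.take (j+1+i) := by
          rw [List.append_assoc, ← List.take_add]
        have hle : j+1+i ≤ w.length := by
          simp [List.length_drop] at hi; omega
        constructor
        · exact ⟨j+1+i, hle, by rw [heq]⟩
        · intro hmem
          simp only [Set.mem_singleton_iff] at hmem
          rw [heq] at hmem
          have := le_mcyc t _ _ hle hmem
          omega
      have hmono : (Rset t (p ++ w.take (j+1)) (w.drop (j+1))).ncard ≤
          (Rset t p w \ {Dset t p}).ncard :=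
        Set.ncard_le_ncard hsub (Rset_finite hfin p w).diff
      have hdiff : (Rset t p w \ {Dset t p}).ncard = (Rset t p w).ncard - 1 :=
        Set.ncard_diff_singleton_of_mem (Dset_mem_Rset p w)
      have := ih (p ++ w.take (j+1)) (w.drop (j+1)) hlt'
      rw [EncF_succ, if_neg hj, List.length_cons, ← hjdef] at *
      omega

lemma EncF_inj (h : IsEnd t)
    (hU : ∀ v c c' z : List A, c.length = c'.length →
      Dset t (v ++ c) = Dset t v → Dset t (v ++ c') = Dset t v →
      Acc t (v ++ z) → c = c') :
    ∀ (f : ℕ) (p w1 w2 : List A), w1.length < f → w2.length < f →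
      Acc t (p ++ w1) → Acc t (p ++ w2) →
      EncF t f p w1 = EncF t f p w2 → w1 = w2 := by
  intro f
  induction f with
  | zero => omega
  | succ f ih =>
    intro p w1 w2 h1 h2 ha1 ha2 he
    rw [EncF_succ, EncF_succ] at he
    simp only [List.cons.injEq, Prod.mk.injEq] at he
    obtain ⟨⟨hj, hget⟩, htail⟩ := he
    rw [← hj] at htail hget
    have hs1 := mcyc_spec t p w1
    have hs2 := mcyc_spec t p w2
    rw [← hj] at hs2
    have hctake : w1.take (mcyc t p w1) = w2.take (mcyc t p w1) := by
      apply hU p _ _ w1 _ hs1.2 hs2.2 ha1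
      rw [List.length_take, List.length_take]
      have := hs1.1; have := hs2.1; omega
    by_cases hb1 : mcyc t p w1 = w1.length
    · have hb2 : mcyc t p w1 = w2.length := by
        by_contra hb2
        rw [if_pos hb1, if_neg hb2] at htail
        have hf : 0 < f := by
          have := hs2.1; omega
        exact EncF_ne_nil hf _ _ htail.symm
      calc w1 = w1.take (mcyc t p w1) := by rw [hb1, List.take_length]
        _ = w2.take (mcyc t p w1) := hctake
        _ = w2 := by rw [hb2, List.take_length]
    · have hf : 0 < f := by
        have := hs1.1; omega
      have hb2 : ¬ mcyc t p w1 = w2.length := by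
        intro e
        rw [if_neg hb1, if_pos e] at htail
        exact EncF_ne_nil hf _ _ htail
      rw [if_neg hb1, if_neg hb2] at htail
      have htke : w1.take (mcyc t p w1 + 1) = w2.take (mcyc t p w1 + 1) := by
        rw [List.take_succ, List.take_succ, hctake, hget]
      rw [← htke] at htail
      have e1 : p ++ w1.take (mcyc t p w1 + 1) ++ w1.drop (mcyc t p w1 + 1)
          = p ++ w1 := by rw [List.append_assoc, List.take_append_drop]
      have e2 : p ++ w1.take (mcyc t p w1 + 1) ++ w2.drop (mcyc t p w1 + 1)
          = p ++ w2 := by rw [htke, List.append_assoc, List.take_append_drop]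
      have hd : w1.drop (mcyc t p w1 + 1) = w2.drop (mcyc t p w1 + 1) := by
        apply ih (p ++ w1.take (mcyc t p w1 + 1)) _ _ ?_ ?_ ?_ ?_ htail
        · have := List.length_drop (i := mcyc t p w1 + 1) (l := w1); omega
        · have := List.length_drop (i := mcyc t p w1 + 1) (l := w2)
          have := hs2.1; omega
        · rw [e1]; exact ha1
        · rw [e2]; exact ha2
      calc w1 = w1.take (mcyc t p w1 + 1) ++ w1.drop (mcyc t p w1 + 1) :=
            (List.take_append_drop _ _).symm
        _ = w2.take (mcyc t p w1 + 1) ++ w2.drop (mcyc t p w1 + 1) := by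
            rw [htke, hd]
        _ = w2 := List.take_append_drop _ _

lemma finite_len [Fintype A] : ∀ n : ℕ, {v : List A | v.length = n}.Finite
  | 0 => by
      have : {v : List A | v.length = 0} = {([] : List A)} := by
        ext v; simp [List.length_eq_zero_iff]
      rw [this]; exact Set.finite_singleton _
  | (n+1) => by
      have hsub : {v : List A | v.length = n + 1} ⊆
          Set.image2 List.cons Set.univ {v : List A | v.length = n} := by
        intro v hv
        match v with
        | [] => simp at hv
        | a :: tl =>
          exact Set.mem_image2.mpr ⟨a, trivial, tl, by simpa using hv, rfl⟩
      exact (Set.Finite.image2 _ Set.finite_univ (finite_len n)).subset hsub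

/-- Upper bound on activity under the no-double-cycle condition. -/
lemma act_upper [Fintype A] (ht : IsFEnd t)
    (hU : ∀ v c c' z : List A, c.length = c'.length →
      Dset t (v ++ c) = Dset t v → Dset t (v ++ c') = Dset t v →
      Acc t (v ++ z) → c = c') (n : ℕ) :
    activity t n ≤
      (2 * (Fintype.card A + 2)) ^ ({S : Set (List A → List A) |
          S ⊆ {g | ∃ u, g = sec t u}}.ncard) *
        (n ^ ({S : Set (List A → List A) | S ⊆ {g | ∃ u, g = sec t u}}.ncard) + 1) := by
  classical
  set N := {S : Set (List A → List A) | S ⊆ {g | ∃ u, g = sec t u}}.ncard with hN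
  set K := Fintype.card A with hK
  rw [activity_eq ht.1]
  set Sact := {v : List A | v.length = n ∧ Acc t v} with hSact
  set Φ : List A → (Fin N → Option (Fin (n+1) × Option A)) :=
    fun v i => ((EncF t (n+1) [] v)[(i : ℕ)]?).map
      (fun x => (⟨min x.1 n, by omega⟩, x.2)) with hΦ
  have hlenb : ∀ v : List A, v.length = n → (EncF t (n+1) [] v).length ≤ N := by
    intro v hv
    refine (EncF_length_le ht.2 (n+1) [] v (by omega)).trans ?_
    exact Set.ncard_le_ncard (Rset_subset _ _) (Set.Finite.finite_subsets ht.2)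
  have hinj : Set.InjOn Φ Sact := by
    intro v1 hv1 v2 hv2 hveq
    obtain ⟨hl1, hacc1⟩ := hv1
    obtain ⟨hl2, hacc2⟩ := hv2
    have hEeq : EncF t (n+1) [] v1 = EncF t (n+1) [] v2 := by
      apply List.ext_getElem?
      intro i
      by_cases hi : i < N
      · have hcf := congrFun hveq ⟨i, hi⟩
        simp only [hΦ] at hcf
        cases e1 : (EncF t (n+1) [] v1)[i]? with
        | none =>
          cases e2 : (EncF t (n+1) [] v2)[i]? with
          | none => rfl
          | some b => rw [e1, e2] at hcf; simp at hcf
        | some a =>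
          cases e2 : (EncF t (n+1) [] v2)[i]? with
          | none => rw [e1, e2] at hcf; simp at hcf
          | some b =>
            rw [e1, e2] at hcf
            simp only [Option.map_some, Option.some.injEq, Prod.mk.injEq,
              Fin.mk.injEq] at hcf
            have m1 : a.1 ≤ n := by
              have := EncF_entries (n+1) [] v1 a (List.mem_of_getElem? e1); omega
            have m2 : b.1 ≤ n := by
              have := EncF_entries (n+1) [] v2 b (List.mem_of_getElem? e2); omega
            have : a.1 = b.1 := by
              have := hcf.1; omega
            exact congrArg some (Prod.ext this hcf.2)
      · have n1 : (EncF t (n+1) [] v1)[i]? = none :=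
          List.getElem?_eq_none (le_trans (hlenb v1 hl1) (by omega))
        have n2 : (EncF t (n+1) [] v2)[i]? = none :=
          List.getElem?_eq_none (le_trans (hlenb v2 hl2) (by omega))
        rw [n1, n2]
    exact EncF_inj ht.1 hU (n+1) [] v1 v2 (by omega) (by omega)
      (by simpa using hacc1) (by simpa using hacc2) hEeq
  have hcard : Sact.ncard ≤ ((n+1) * (K+1) + 1) ^ N := by
    calc Sact.ncard = (Φ '' Sact).ncard := (Set.ncard_image_of_injOn hinj).symm
      _ ≤ (Set.univ : Set (Fin N → Option (Fin (n+1) × Option A))).ncard :=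
          Set.ncard_le_ncard (Set.subset_univ _) Set.finite_univ
      _ = Fintype.card (Fin N → Option (Fin (n+1) × Option A)) := by
          rw [Set.ncard_univ, Nat.card_eq_fintype_card]
      _ = ((n+1) * (K+1) + 1) ^ N := by
          simp [Fintype.card_option, hK]
  refine hcard.trans ?_
  have s1 : (n+1) * (K+1) + 1 ≤ (n+1) * (K+2) := by
    calc (n+1) * (K+1) + 1 ≤ (n+1) * (K+1) + (n+1) := by omega
      _ = (n+1) * (K+2) := by ring
  have s2 : (n+1) ^ N ≤ 2 ^ N * (n ^ N + 1) := by
    rcases Nat.eq_zero_or_pos n with rfl | hn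
    · have h2 : 1 ≤ 2 ^ N := Nat.one_le_two_pow
      have h3 : (1:ℕ) ≤ 0 ^ N + 1 := Nat.le_add_left 1 _
      calc (0+1) ^ N = 1 := one_pow N
        _ ≤ 2 ^ N * (0 ^ N + 1) := Nat.one_le_iff_ne_zero.mpr (by positivity)
    · calc (n+1) ^ N ≤ (2 * n) ^ N := Nat.pow_le_pow_left (by omega) N
        _ = 2 ^ N * n ^ N := by rw [mul_pow]
        _ ≤ 2 ^ N * (n ^ N + 1) := by
            exact Nat.mul_le_mul_left _ (by omega)
  calc ((n+1) * (K+1) + 1) ^ N ≤ ((n+1) * (K+2)) ^ N := Nat.pow_le_pow_left s1 N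
    _ = (n+1) ^ N * (K+2) ^ N := by rw [mul_pow]
    _ ≤ (2 ^ N * (n ^ N + 1)) * (K+2) ^ N := Nat.mul_le_mul_right _ s2
    _ = (2 * (K+2)) ^ N * (n ^ N + 1) := by rw [mul_pow]; ring

/-- Concatenation of `k` blocks, each `c` or `c'`. -/
def blocks (c c' : List A) : List Bool → List A
  | [] => []
  | b :: bs => (if b then c else c') ++ blocks c c' bs

lemma blocks_length {c c' : List A} (hlen : c.length = c'.length) :
    ∀ bs : List Bool, (blocks c c' bs).length = bs.length * c.length := by
  intro bs
  induction bs with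
  | nil => simp [blocks]
  | cons b bs ih =>
    cases b <;> simp [blocks, ih, hlen] <;> ring

lemma blocks_inj {c c' : List A} (hne : c ≠ c') (hlen : c.length = c'.length) :
    ∀ bs1 bs2 : List Bool, bs1.length = bs2.length →
      blocks c c' bs1 = blocks c c' bs2 → bs1 = bs2 := by
  intro bs1
  induction bs1 with
  | nil => intro bs2 hl _; cases bs2 with
    | nil => rfl
    | cons b bs => simp at hl
  | cons b1 bs1 ih =>
    intro bs2 hl he
    cases bs2 with
    | nil => simp at hl
    | cons b2 bs2 =>
      simp only [blocks] at he
      have hll : (if b1 then c else c').length = (if b2 then c else c').length := by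
        cases b1 <;> cases b2 <;> simp [hlen]
      obtain ⟨h1, h2⟩ := List.append_inj he hll
      have hb : b1 = b2 := by
        cases b1 <;> cases b2 <;> simp_all
      simp at hl
      rw [hb, ih bs2 (by omega) h2]

lemma blocks_cycle (h : IsEnd t) {v c c' : List A}
    (hc : Dset t (v ++ c) = Dset t v) (hc' : Dset t (v ++ c') = Dset t v) :
    ∀ bs : List Bool, Dset t (v ++ blocks c c' bs) = Dset t v := by
  intro bs
  induction bs with
  | nil => simp [blocks]
  | cons b bs ih =>
    show Dset t (v ++ ((if b then c else c') ++ blocks c c' bs)) = Dset t v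
    rw [← List.append_assoc]
    have hone : Dset t (v ++ (if b then c else c')) = Dset t v := by
      cases b <;> simpa
    rw [Dset_congr h hone, ih]

lemma ncard_len_bool (k : ℕ) : {bs : List Bool | bs.length = k}.ncard = 2 ^ k := by
  rw [← Nat.card_coe_set_eq]
  calc Nat.card ↥{bs : List Bool | bs.length = k}
      = Nat.card (List.Vector Bool k) := rfl
    _ = Fintype.card (List.Vector Bool k) := Nat.card_eq_fintype_card
    _ = 2 ^ k := by rw [card_vector]; simp

lemma act_lower [Fintype A] (h : IsEnd t) {v c c' z : List A}
    (hne : c ≠ c') (hlen : c.length = c'.length)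
    (hc : Dset t (v ++ c) = Dset t v) (hc' : Dset t (v ++ c') = Dset t v)
    (hacc : Acc t (v ++ z)) (k : ℕ) :
    2 ^ k ≤ activity t (v.length + k * c.length + z.length) := by
  rw [activity_eq h]
  set n := v.length + k * c.length + z.length with hn
  set F : List Bool → List A := fun bs => v ++ (blocks c c' bs ++ z) with hF
  have himg : F '' {bs | bs.length = k} ⊆ {x : List A | x.length = n ∧ Acc t x} := by
    rintro _ ⟨bs, hbs, rfl⟩
    have hbsl : bs.length = k := hbs
    constructor
    · simp [hF, blocks_length hlen, hbsl, hn]; ring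
    · have e : Dset t (v ++ (blocks c c' bs ++ z)) = Dset t (v ++ z) := by
        rw [← List.append_assoc]
        exact Dset_congr h (blocks_cycle h hc hc' bs) z
      exact (Acc_congr h e).mpr hacc
  have hinj2 : Set.InjOn F {bs | bs.length = k} := by
    intro b1 h1 b2 h2 he
    have h1' : (b1 : List Bool).length = k := h1
    have h2' : (b2 : List Bool).length = k := h2
    have hcz : blocks c c' b1 ++ z = blocks c c' b2 ++ z := by
      have := he
      simpa [hF] using this
    have hb : blocks c c' b1 = blocks c c' b2 :=
      List.append_inj_left hcz (by rw [blocks_length hlen, blocks_length hlen, h1', h2'])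
    exact blocks_inj hne hlen b1 b2 (by omega) hb
  calc 2 ^ k = {bs : List Bool | bs.length = k}.ncard := (ncard_len_bool k).symm
    _ = (F '' {bs | bs.length = k}).ncard := (Set.ncard_image_of_injOn hinj2).symm
    _ ≤ {x : List A | x.length = n ∧ Acc t x}.ncard :=
        Set.ncard_le_ncard himg ((finite_len n).subset (fun x hx => hx.1))

lemma act_le_pow [Fintype A] (h : IsEnd t) (n : ℕ) :
    activity t n ≤ Fintype.card A ^ n := by
  rw [activity_eq h]
  have hcard : {v : List A | v.length = n}.ncard = Fintype.card A ^ n := by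
    rw [← Nat.card_coe_set_eq]
    calc Nat.card ↥{v : List A | v.length = n}
        = Nat.card (List.Vector A n) := rfl
      _ = Fintype.card (List.Vector A n) := Nat.card_eq_fintype_card
      _ = Fintype.card A ^ n := card_vector n
  calc {v : List A | v.length = n ∧ Acc t v}.ncard
      ≤ {v : List A | v.length = n}.ncard :=
        Set.ncard_le_ncard (fun v hv => hv.1) (finite_len n)
    _ = Fintype.card A ^ n := hcard

lemma g_nonneg (t : List A → List A) (n : ℕ) :
    0 ≤ Real.log (activity t n) / (n : ℝ) := by
  apply div_nonneg _ (Nat.cast_nonneg n)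
  rcases Nat.eq_zero_or_pos (activity t n) with h | h
  · simp [h]
  · exact Real.log_nonneg (by exact_mod_cast h)

lemma g_bdd [Fintype A] (h : IsEnd t) (n : ℕ) :
    Real.log (activity t n) / (n : ℝ) ≤ max 0 (Real.log (Fintype.card A)) := by
  rcases Nat.eq_zero_or_pos n with rfl | hn
  · simp
  rcases Nat.eq_zero_or_pos (activity t n) with ha | ha
  · simp [ha]
  have hK : 1 ≤ Fintype.card A := by
    by_contra hK
    have h0 : Fintype.card A = 0 := by omega
    have := act_le_pow h n
    rw [h0, Nat.zero_pow (by omega)] at this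
    omega
  have l1 : Real.log (activity t n) ≤ Real.log ((Fintype.card A : ℝ) ^ n) := by
    apply Real.log_le_log (by exact_mod_cast ha)
    exact_mod_cast act_le_pow h n
  have hnpos : (0:ℝ) < n := by exact_mod_cast hn
  calc Real.log (activity t n) / (n:ℝ)
      ≤ Real.log ((Fintype.card A : ℝ) ^ n) / (n:ℝ) := by gcongr
    _ = ((n:ℝ) * Real.log (Fintype.card A)) / (n:ℝ) := by rw [Real.log_pow]
    _ = Real.log (Fintype.card A) := by field_simp
    _ ≤ max 0 (Real.log (Fintype.card A)) := le_max_right _ _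
end Dichotomy

/-- `SE(0)` coincides with the union of the polynomial classes: for `t ∈ FEnd(Σ*)`,
`limsup (log α_t(n))/n ≤ 0` iff there are `d ∈ ℕ` and `c > 0` with
`α_t(n) ≤ c (n^d + 1)` for all `n`. -/
theorem SE_zero_iff_polynomial {A : Type*} [Fintype A] (t : List A → List A)
    (ht : IsFEnd t) :
    limsup (fun n : ℕ => Real.log (activity t n) / (n : ℝ)) atTop ≤ 0 ↔
      ∃ (d : ℕ) (c : ℝ), 0 < c ∧
        ∀ n : ℕ, (activity t n : ℝ) ≤ c * ((n : ℝ) ^ d + 1) := by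
  have gbdd : IsBoundedUnder (· ≤ ·) atTop
      (fun n : ℕ => Real.log (activity t n) / (n : ℝ)) :=
    isBoundedUnder_of ⟨max 0 (Real.log (Fintype.card A)), fun n => g_bdd ht.1 n⟩
  have gcob : IsCoboundedUnder (· ≤ ·) atTop
      (fun n : ℕ => Real.log (activity t n) / (n : ℝ)) :=
    (isBoundedUnder_of ⟨0, fun n => g_nonneg t n⟩ :
      IsBoundedUnder (· ≥ ·) atTop _).isCoboundedUnder_le
  constructor
  · -- limsup ≤ 0 → polynomial
    intro hse
    by_cases hA : ∃ v c c' z : List A, c ≠ c' ∧ c.length = c'.length ∧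
        Dset t (v ++ c) = Dset t v ∧ Dset t (v ++ c') = Dset t v ∧ Acc t (v ++ z)
    · exfalso
      obtain ⟨v, c, c', z, hne, hlen, hc, hc', hacc⟩ := hA
      have hp : 0 < c.length := by
        rcases Nat.eq_zero_or_pos c.length with h0 | h0
        · exfalso
          apply hne
          rw [List.length_eq_zero_iff.mp h0, List.length_eq_zero_iff.mp (by omega : c'.length = 0)]
        · exact h0
      have hlog2 : (0:ℝ) < Real.log 2 := Real.log_pos one_lt_two
      have hfreq : ∃ᶠ n in atTop,
          Real.log 2 / (2 * c.length) ≤ Real.log (activity t n) / (n : ℝ) := by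
        rw [frequently_atTop]
        intro N0
        set k := N0 + v.length + z.length + 1 with hk
        have hkk : k ≤ k * c.length := Nat.le_mul_of_pos_right k hp
        set n := v.length + k * c.length + z.length with hn
        refine ⟨n, by omega, ?_⟩
        have hact := act_lower ht.1 hne hlen hc hc' hacc k
        have hnpos : 0 < n := by omega
        have l1 : (k : ℝ) * Real.log 2 ≤ Real.log (activity t n) := by
          rw [← Real.log_pow]
          exact Real.log_le_log (by positivity) (by exact_mod_cast hact)
        have l2 : (k : ℝ) * Real.log 2 / n ≤ Real.log (activity t n) / n := by
          gcongr
        refine le_trans ?_ l2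
        rw [div_le_div_iff₀ (by positivity) (by exact_mod_cast hnpos)]
        have hn2 : (n : ℕ) ≤ k * (2 * c.length) := by
          have e : k * (2 * c.length) = k * c.length + k * c.length := by ring
          omega
        calc Real.log 2 * n ≤ Real.log 2 * (k * (2 * c.length)) := by
              apply mul_le_mul_of_nonneg_left _ hlog2.le
              exact_mod_cast hn2
          _ = (k : ℝ) * Real.log 2 * (2 * c.length) := by push_cast; ring
      have hge := le_limsup_of_frequently_le hfreq gbdd
      have hpos : (0:ℝ) < Real.log 2 / (2 * c.length) := by positivity
      linarith
    · have hU : ∀ v c c' z : List A, c.length = c'.length →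
          Dset t (v ++ c) = Dset t v → Dset t (v ++ c') = Dset t v →
          Acc t (v ++ z) → c = c' := by
        intro v c c' z h1 h2 h3 h4
        by_contra hnecc
        exact hA ⟨v, c, c', z, hnecc, h1, h2, h3, h4⟩
      refine ⟨{S : Set (List A → List A) | S ⊆ {g | ∃ u, g = sec t u}}.ncard,
        ((2 * (Fintype.card A + 2)) ^ ({S : Set (List A → List A) |
          S ⊆ {g | ∃ u, g = sec t u}}.ncard) : ℕ), by positivity, fun n => ?_⟩
      have := act_upper ht hU n
      push_cast
      exact_mod_cast this
  · -- polynomial → limsup ≤ 0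
    rintro ⟨d, c, hc, hb⟩
    have hlim : Tendsto (fun n : ℕ =>
        max 0 ((Real.log c + Real.log 2 + d * Real.log n) / n)) atTop (𝓝 0) := by
      have t1 : Tendsto (fun n : ℕ => (Real.log c + Real.log 2) / (n:ℝ)) atTop (𝓝 0) :=
        tendsto_const_div_atTop_nhds_zero_nat _
      have t2 : Tendsto (fun n : ℕ => Real.log n / n) atTop (𝓝 0) :=
        Real.isLittleO_log_id_atTop.tendsto_div_nhds_zero.comp tendsto_natCast_atTop_atTop
      have t3 : Tendsto (fun n : ℕ =>
          (Real.log c + Real.log 2) / (n:ℝ) + d * (Real.log n / n)) atTop (𝓝 0) := by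
        have := t1.add (t2.const_mul (d:ℝ))
        simpa using this
      have t4 : Tendsto (fun n : ℕ =>
          (Real.log c + Real.log 2 + d * Real.log n) / n) atTop (𝓝 0) := by
        convert t3 using 2 with n
        rw [add_div, mul_div_assoc]
      have t5 : Tendsto (fun _ : ℕ => (0:ℝ)) atTop (𝓝 0) := tendsto_const_nhds
      simpa using t5.max t4
    have hle : ∀ᶠ n in atTop, Real.log (activity t n) / (n : ℝ) ≤
        max 0 ((Real.log c + Real.log 2 + d * Real.log n) / n) := by
      rw [eventually_atTop]
      refine ⟨1, fun n hn => ?_⟩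
      rcases Nat.eq_zero_or_pos (activity t n) with ha | ha
      · simp [ha]
      have hnpos : (0:ℝ) < n := by exact_mod_cast hn
      have hnd : (1:ℝ) ≤ (n:ℝ) ^ d := by
        apply one_le_pow₀
        exact_mod_cast hn
      have h2 : (activity t n : ℝ) ≤ c * (2 * (n:ℝ) ^ d) :=
        (hb n).trans (by nlinarith)
      have h3 : Real.log (activity t n) ≤ Real.log (c * (2 * (n:ℝ) ^ d)) :=
        Real.log_le_log (by exact_mod_cast ha) h2
      have h4 : Real.log (c * (2 * (n:ℝ) ^ d))
          = Real.log c + Real.log 2 + d * Real.log n := by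
        rw [Real.log_mul (ne_of_gt hc) (by positivity),
          Real.log_mul (by norm_num) (by positivity), Real.log_pow]
        ring
      calc Real.log (activity t n) / (n:ℝ)
          ≤ (Real.log c + Real.log 2 + d * Real.log n) / n := by
            rw [← h4]; gcongr
        _ ≤ max 0 ((Real.log c + Real.log 2 + d * Real.log n) / n) := le_max_right _ _
    have := limsup_le_limsup hle gcob hlim.isBoundedUnder_le
    rwa [hlim.limsup_eq] at this

end AutHier
end

section
/- Strictness of the polynomial hierarchy: over Σ = {1,2}, define t_0 ∈ FEnd(Σ*) by t_0(1u) = 2u and t_0(2u) = 2·t_0(u) for all u ∈ Σ*, and for k ≥ 1 define t_k by t_k(1u) = c_k·t_{k−1}(u) and t_k(2u) = c_k·t_k(u), where c_k = 2 − (k mod 2). Then each t_k is a finite-state endomorphism and, for every k ≥ 0, t_k ∈ SP(k) ∖ SP(k−1): α_{t_k}(n)/n^{k+1} → 0 as n → ∞, but α_{t_k}(n)/n^{k} does not tend to 0. -/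
open Filter Topology

namespace AutHier

variable {A : Type*}

/-- The letter `c_k = 2 - (k mod 2)` over the alphabet `{1, 2}`, encoded as `Bool` with
`false ↦ 1` and `true ↦ 2`. -/
def ck (k : ℕ) : Bool := decide (k % 2 = 0)

/-- The transformations `t_k` over `Σ = {1,2}` (encoded as `Bool`, `false ↦ 1`,
`true ↦ 2`): `t_0(1u) = 2u`, `t_0(2u) = 2·t_0(u)`, and for `k ≥ 1`
`t_k(1u) = c_k·t_{k-1}(u)`, `t_k(2u) = c_k·t_k(u)`. -/
def tk : ℕ → List Bool → List Bool
  | _, [] => []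
  | 0, false :: u => true :: u
  | 0, true :: u => true :: tk 0 u
  | k + 1, false :: u => ck (k + 1) :: tk k u
  | k + 1, true :: u => ck (k + 1) :: tk (k + 1) u
termination_by k u => (k, u.length)

/-! Reading `u`, the transformation `t_k` counts the letters `1` (encoded as `false`): after
`j ≤ k` of them it is in state `t_{k-j}`, after the `(k+1)`-st it is the identity. Hence
`t_k|_u ≠ id` exactly when `u` contains at most `k` ones, and `α_{t_k}(n)` counts images of such
words of length `n`, so `α_{t_k}(n) ≤ ∑_{j ≤ k} C(n, j) = O(n^k)`. Conversely, the state
`t_{k-j}` writes `c_{k-j}`, whose parity records `j`; so the output determines every letter of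
`u` but the last, and on words with exactly `k` ones the last letter is forced as well, giving
`α_{t_k}(n) ≥ C(n, k) = Θ(n^k)`. -/

open Asymptotics

section Asymptotics

variable {a : ℕ → ℝ} {k : ℕ}

lemma tendsto_div_pow_succ_of_isBigO (h : a =O[atTop] fun n => (n : ℝ) ^ k) :
    Tendsto (fun n => a n / (n : ℝ) ^ (k + 1)) atTop (𝓝 0) := by
  have hpow : (fun n : ℕ => (n : ℝ) ^ k) =o[atTop] fun n => (n : ℝ) ^ (k + 1) :=
    (isLittleO_pow_pow_atTop_of_lt k.lt_succ_self).comp_tendsto tendsto_natCast_atTop_atTop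
  exact (h.trans_isLittleO hpow).tendsto_div_nhds_zero

lemma not_tendsto_div_pow_of_isBigO (h : (fun n : ℕ => (n : ℝ) ^ k) =O[atTop] a) :
    ¬ Tendsto (fun n => a n / (n : ℝ) ^ k) atTop (𝓝 0) := by
  intro h0
  have hne : ∀ᶠ n : ℕ in atTop, (n : ℝ) ^ k ≠ 0 :=
    (eventually_ne_atTop 0).mono fun n hn => pow_ne_zero k (Nat.cast_ne_zero.2 hn)
  have ho : a =o[atTop] fun n => (n : ℝ) ^ k :=
    (isLittleO_iff_tendsto' (hne.mono fun n hn h => absurd h hn)).2 h0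
  exact isLittleO_irrefl hne.frequently (h.trans_isLittleO ho)

end Asymptotics

section Sections

variable {A : Type*}

lemma sec_eq_of_append {f g : List A → List A} {u : List A}
    (hlen : (f u).length = u.length) (h : ∀ v, f (u ++ v) = f u ++ g v) : sec f u = g := by
  funext v
  simp [sec, h, ← hlen]

lemma activity_eq_ncard_image {f : List A → List A} (hlen : ∀ u, (f u).length = u.length)
    (n : ℕ) : activity f n = (f '' {u | u.length = n ∧ sec f u ≠ id}).ncard := by
  rw [activity]
  congr 1
  ext v
  constructor
  · rintro ⟨-, u, hu, hsec, rfl⟩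
    exact ⟨u, ⟨hu, hsec⟩, rfl⟩
  · rintro ⟨u, ⟨hu, hsec⟩, rfl⟩
    exact ⟨by rw [hlen, hu], u, hu, hsec, rfl⟩

end Sections

def falseCountWords (n k : ℕ) : Set (List Bool) :=
  {u | u.length = n ∧ u.count false = k}

lemma falseCountWords_finite (n k : ℕ) : (falseCountWords n k).Finite :=
  (List.finite_length_eq Bool n).subset fun _ hu => hu.1

lemma falseCountWords_succ_zero (n : ℕ) :
    falseCountWords (n + 1) 0 = List.cons true '' falseCountWords n 0 := by
  ext u
  rcases u with _ | ⟨_ | _, u⟩ <;> simp [falseCountWords]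

lemma falseCountWords_succ_succ (n k : ℕ) :
    falseCountWords (n + 1) (k + 1) =
      List.cons true '' falseCountWords n (k + 1) ∪ List.cons false '' falseCountWords n k := by
  ext u
  rcases u with _ | ⟨_ | _, u⟩ <;> simp [falseCountWords]

lemma ncard_falseCountWords (n k : ℕ) : (falseCountWords n k).ncard = n.choose k := by
  induction n generalizing k with
  | zero =>
    rcases k with _ | k
    · rw [show falseCountWords 0 0 = {[]} by ext u; simp +contextual [falseCountWords]]
      simp
    · rw [show falseCountWords 0 (k + 1) = ∅ by ext u; simp +contextual [falseCountWords]]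
      simp
  | succ n ih =>
    rcases k with _ | k
    · rw [falseCountWords_succ_zero, Set.ncard_image_of_injective _ List.cons_injective, ih]
      simp
    · have hdisj : Disjoint (List.cons true '' falseCountWords n (k + 1))
          (List.cons false '' falseCountWords n k) := by
        rw [Set.disjoint_left]
        rintro _ ⟨u, -, rfl⟩ ⟨v, -, h⟩
        simp at h
      rw [falseCountWords_succ_succ, Set.ncard_union_eq hdisj ((falseCountWords_finite _ _).image _)
        ((falseCountWords_finite _ _).image _), Set.ncard_image_of_injective _ List.cons_injective,
        Set.ncard_image_of_injective _ List.cons_injective, ih, ih, Nat.choose_succ_succ' n k,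
        add_comm]

@[simp] lemma tk_nil (k : ℕ) : tk k [] = [] := by
  cases k <;> simp [tk]

@[simp] lemma tk_cons_true (k : ℕ) (u : List Bool) : tk k (true :: u) = ck k :: tk k u := by
  cases k <;> simp [tk, ck]

@[simp] lemma tk_zero_cons_false (u : List Bool) : tk 0 (false :: u) = true :: u := by
  simp [tk]

@[simp] lemma tk_succ_cons_false (k : ℕ) (u : List Bool) :
    tk (k + 1) (false :: u) = ck (k + 1) :: tk k u := by
  simp [tk]

@[simp] lemma length_tk (k : ℕ) (u : List Bool) : (tk k u).length = u.length := by
  induction u generalizing k with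
  | nil => simp
  | cons x u ih => cases x <;> cases k <;> simp [ih]

lemma tk_singleton (k : ℕ) (x : Bool) : tk k [x] = [ck k] := by
  cases x <;> cases k <;> simp [ck]

lemma tk_ne_id (k : ℕ) : tk k ≠ id := by
  intro h
  have := congrFun h [!ck k]
  simp [tk_singleton] at this

lemma tk_append (k : ℕ) (u v : List Bool) :
    tk k (u ++ v) = tk k u ++ (if u.count false ≤ k then tk (k - u.count false) else id) v := by
  induction u generalizing k with
  | nil => simp
  | cons x u ih =>
    cases x
    · cases k with
      | zero => simp
      | succ k => simp [ih]
    · simp [ih]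

lemma sec_tk (k : ℕ) (u : List Bool) :
    sec (tk k) u = if u.count false ≤ k then tk (k - u.count false) else id :=
  sec_eq_of_append (length_tk k u) (tk_append k u)

lemma sec_tk_ne_id_iff (k : ℕ) (u : List Bool) : sec (tk k) u ≠ id ↔ u.count false ≤ k := by
  rw [sec_tk]
  split_ifs with h
  · exact iff_of_true (tk_ne_id _) h
  · exact iff_of_false (not_not.2 rfl) h

lemma isFEnd_tk (k : ℕ) : IsFEnd (tk k) := by
  refine ⟨⟨length_tk k, fun u v => ⟨_, (tk_append k u v).symm⟩⟩, ?_⟩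
  refine (((Set.finite_Iic k).image tk).union (Set.finite_singleton id)).subset ?_
  rintro _ ⟨u, rfl⟩
  rw [sec_tk]
  split_ifs
  · exact Or.inl ⟨k - u.count false, Nat.sub_le _ _, rfl⟩
  · exact Or.inr rfl

lemma activity_tk (k n : ℕ) :
    activity (tk k) n = (tk k '' {u | u.length = n ∧ u.count false ≤ k}).ncard := by
  simp only [activity_eq_ncard_image (length_tk k), sec_tk_ne_id_iff]

lemma activity_tk_le (k : ℕ) {n : ℕ} (hn : 1 ≤ n) : activity (tk k) n ≤ (k + 1) * n ^ k := by
  have hwords : {u : List Bool | u.length = n ∧ u.count false ≤ k} =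
      ⋃ j : Fin (k + 1), falseCountWords n j := by
    ext u
    simp only [Set.mem_ofPred_eq, Set.mem_iUnion, falseCountWords]
    exact ⟨fun ⟨hu, hc⟩ => ⟨⟨_, Nat.lt_succ_of_le hc⟩, hu, rfl⟩,
      fun ⟨j, hu, hc⟩ => ⟨hu, hc ▸ Nat.le_of_lt_succ j.isLt⟩⟩
  calc activity (tk k) n ≤ {u : List Bool | u.length = n ∧ u.count false ≤ k}.ncard :=
        activity_tk k n ▸ Set.ncard_image_le ((List.finite_length_eq Bool n).subset fun _ hu => hu.1)
    _ ≤ ∑ j : Fin (k + 1), (falseCountWords n j).ncard :=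
        hwords ▸ Set.ncard_iUnion_le_of_fintype _
    _ ≤ ∑ _j : Fin (k + 1), n ^ k := by
        gcongr with j
        rw [ncard_falseCountWords]
        exact (Nat.choose_le_pow n j).trans (Nat.pow_le_pow_right hn (Nat.le_of_lt_succ j.isLt))
    _ = (k + 1) * n ^ k := by simp

lemma tk_cons_of_count_le {k : ℕ} {x : Bool} {u : List Bool} (h : (x :: u).count false ≤ k) :
    tk k (x :: u) = ck k :: tk (k - [x].count false) u := by
  have hx : [x].count false ≤ k := le_trans (by cases x <;> simp) h
  rw [← List.singleton_append, tk_append, tk_singleton, if_pos hx]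
  rfl

lemma head?_tk_cons (k : ℕ) (x : Bool) (u : List Bool) : (tk k (x :: u)).head? = some (ck k) := by
  rw [← List.singleton_append, tk_append, tk_singleton]
  rfl

lemma dropLast_eq_of_tk_eq {k : ℕ} {u u' : List Bool} (hlen : u.length = u'.length)
    (hu : u.count false ≤ k) (hu' : u'.count false ≤ k) (h : tk k u = tk k u') :
    u.dropLast = u'.dropLast := by
  induction u generalizing k u' with
  | nil => simp [List.length_eq_zero_iff.1 hlen.symm]
  | cons x v ih =>
    rcases u' with _ | ⟨x', v'⟩
    · simp at hlen
    rcases v with _ | ⟨y, w⟩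
    · simp [List.length_eq_zero_iff.1 (Nat.succ_injective hlen).symm]
    rcases v' with _ | ⟨y', w'⟩
    · simp at hlen
    rw [tk_cons_of_count_le hu, tk_cons_of_count_le hu'] at h
    obtain ⟨-, h⟩ := List.cons.inj h
    have hx : x = x' := by
      have hck := congrArg List.head? h
      rw [head?_tk_cons, head?_tk_cons] at hck
      cases x <;> cases x' <;> simp [ck, List.count_cons] at hck hu hu' ⊢ <;> omega
    subst hx
    have hcount : (y :: w).count false ≤ k - [x].count false ∧
        (y' :: w').count false ≤ k - [x].count false := by
      cases x <;> simp [List.count_cons] at hu hu' ⊢ <;> omega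
    rw [List.dropLast_cons_cons, List.dropLast_cons_cons,
      ih (Nat.succ_injective hlen) hcount.1 hcount.2 h]

lemma injOn_tk_falseCountWords (k n : ℕ) : Set.InjOn (tk k) (falseCountWords n k) := by
  rintro u ⟨hu, hcu⟩ u' ⟨hu', hcu'⟩ h
  have hdrop := dropLast_eq_of_tk_eq (hu.trans hu'.symm) hcu.le hcu'.le h
  rcases eq_or_ne u [] with rfl | hne
  · exact (List.length_eq_zero_iff.1 (hu'.trans hu.symm)).symm
  have hne' : u' ≠ [] := List.ne_nil_of_length_pos (hu' ▸ hu ▸ List.length_pos_of_ne_nil hne)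
  rw [← List.dropLast_append_getLast hne, hdrop] at hcu
  rw [← List.dropLast_append_getLast hne'] at hcu'
  rw [← List.dropLast_append_getLast hne, ← List.dropLast_append_getLast hne', hdrop]
  congr 2
  revert hcu hcu'
  cases u.getLast hne <;> cases u'.getLast hne' <;> simp <;> omega

lemma choose_le_activity_tk (k n : ℕ) : n.choose k ≤ activity (tk k) n :=
  calc n.choose k = (tk k '' falseCountWords n k).ncard := by
        rw [(injOn_tk_falseCountWords k n).ncard_image, ncard_falseCountWords]
    _ ≤ activity (tk k) n := activity_tk k n ▸ Set.ncard_le_ncard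
        (Set.image_mono fun _ hu => ⟨hu.1, hu.2.le⟩)
        (((List.finite_length_eq Bool n).subset fun _ hu => hu.1).image _)

lemma isBigO_activity_tk (k : ℕ) :
    (fun n : ℕ => (activity (tk k) n : ℝ)) =O[atTop] fun n => (n : ℝ) ^ k := by
  refine IsBigO.of_bound (k + 1) ?_
  filter_upwards [eventually_ge_atTop 1] with n hn
  simp only [Real.norm_natCast, norm_pow]
  exact_mod_cast activity_tk_le k hn

lemma isBigO_pow_activity_tk (k : ℕ) :
    (fun n : ℕ => (n : ℝ) ^ k) =O[atTop] fun n => (activity (tk k) n : ℝ) :=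
  (isTheta_choose k).symm.isBigO.trans <| IsBigO.of_bound 1 <| Eventually.of_forall fun n => by
    simpa using choose_le_activity_tk k n

/-- Strictness of the polynomial hierarchy: each `t_k` is a finite-state endomorphism
and `t_k ∈ SP(k) ∖ SP(k-1)`: `α_{t_k}(n)/n^{k+1} → 0` but `α_{t_k}(n)/n^k ↛ 0`. -/
theorem tk_strict_hierarchy (k : ℕ) :
    IsFEnd (tk k) ∧
    Tendsto (fun n : ℕ => (activity (tk k) n : ℝ) / (n : ℝ) ^ (k + 1)) atTop (𝓝 0) ∧
    ¬ Tendsto (fun n : ℕ => (activity (tk k) n : ℝ) / (n : ℝ) ^ k) atTop (𝓝 0) :=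
  ⟨isFEnd_tk k, tendsto_div_pow_succ_of_isBigO (isBigO_activity_tk k),
    not_tendsto_div_pow_of_isBigO (isBigO_pow_activity_tk k)⟩

end AutHier
end
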